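/- Let LCP_A[2..2n] be the LCP array of a Wheeler DFA, let h ≥ 1, and let V(h) be any subset of the dependency-graph nodes {v₂, ..., v_{2n}} satisfying the sampling property: for every i there exists 0 ≤ l ≤ 2h−2 such that the l-th backward ancestor v_i(l) exists and either belongs to V(h), or has no incoming edge, or coincides with an earlier ancestor v_i(l') with l' < l. Then for every index i, the value LCP_A[i] is determined by at most 2h−1 applications of the map R together with the stored values {LCP_A[j] : v_j ∈ V(h)}: namely LCP_A[i] = t + LCP_A[R^t(i)] where t ≤ 2h−2 is the least integer such that v_{R^t(i)} ∈ V(h) or R^{t+1}(i) is undefined, or LCP_A[i] = ∞ if a repeated index is encountered among i, R(i), ..., R^{2h−2}(i). -/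
import Mathlib


/-- Backward ancestor at distance `l` in the dependency graph whose unique
incoming edge of `i` is `(R i, i)`. -/
def anc (R : ℕ → Option ℕ) : ℕ → ℕ → Option ℕ
  | 0, v => some v
  | k+1, v => (anc R k v).bind R

lemma anc_add (R : ℕ → Option ℕ) (b a i : ℕ) :
    anc R (a + b) i = (anc R a i).bind (anc R b) := by
  induction b with
  | zero =>
      show anc R a i = (anc R a i).bind (anc R 0)
      cases hx : anc R a i <;> simp [anc, hx]
  | succ b ih =>
      show anc R ((a + b) + 1) i = _
      rw [anc, ih]
      cases anc R a i <;> simp [anc]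

lemma f_chain (f : ℕ → ℕ∞) (R : ℕ → Option ℕ)
    (hrec : ∀ i j : ℕ, R i = some j → f i = 1 + f j) :
    ∀ t i j : ℕ, anc R t i = some j → f i = (t : ℕ∞) + f j := by
  intro t
  induction t with
  | zero => intro i j hij; simp [anc] at hij; subst hij; simp
  | succ t ih =>
      intro i j hij
      rw [anc] at hij
      cases hm : anc R t i with
      | none => rw [hm] at hij; simp at hij
      | some m =>
          rw [hm] at hij
          simp at hij
          rw [ih i m hm, hrec m j hij]
          push_cast
          ring

lemma cycle_top (f : ℕ → ℕ∞) (d : ℕ) (hd : 1 ≤ d) (x : ℕ∞)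
    (hx : x = (d : ℕ∞) + x) : x = ⊤ := by
  cases x with
  | top => rfl
  | coe m =>
      exfalso
      rw [← Nat.cast_add] at hx
      have : m = d + m := Nat.cast_injective hx
      omega

/-- let `f` be the LCP array (values in `ℕ∞`), `R` the partial map
with `f i = 1 + f (R i)` when `R i` is defined and `f i = 0` otherwise, `h ≥ 1`,
and `V` a sample set satisfying the sampling property: from every index `i`, some
backward ancestor at distance `l ≤ 2h-2` is sampled, has no incoming edge, or
coincides with an earlier ancestor. Then every `f i` is determined by at most
`2h-1` applications of `R` and the stored values `{f j : j ∈ V}`: either a repeat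
occurs among `i, R(i), …, R^{2h-2}(i)` and `f i = ∞`, or there is `t ≤ 2h-2` with
`R^t(i)` sampled or `R^{t+1}(i)` undefined and `f i = t + f (R^t(i))`. -/
theorem sampled_lcp_computation (n : ℕ) (f : ℕ → ℕ∞) (R : ℕ → Option ℕ)
    (hrec : ∀ i j : ℕ, R i = some j → f i = 1 + f j)
    (hbase : ∀ i : ℕ, 2 ≤ i → i ≤ 2 * n → R i = none → f i = 0)
    (h : ℕ) (hh : 1 ≤ h) (V : Set ℕ)
    (hsample : ∀ i : ℕ, 2 ≤ i → i ≤ 2 * n → ∃ l ≤ 2 * h - 2, ∃ w : ℕ,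
      anc R l i = some w ∧
      (w ∈ V ∨ R w = none ∨ ∃ l' < l, anc R l' i = some w)) :
    ∀ i : ℕ, 2 ≤ i → i ≤ 2 * n →
      ((∃ l l', l < l' ∧ l' ≤ 2 * h - 2 ∧ (anc R l i).isSome ∧
          anc R l i = anc R l' i) ∧ f i = ⊤) ∨
      (∃ t ≤ 2 * h - 2, ∃ j : ℕ, anc R t i = some j ∧ (j ∈ V ∨ R j = none) ∧
          f i = (t : ℕ∞) + f j) := by
  intro i h2 hn
  obtain ⟨l, hl, w, hw, hcase⟩ := hsample i h2 hn
  rcases hcase with hV | hnone | ⟨l', hl', hw'⟩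
  · exact Or.inr ⟨l, hl, w, hw, Or.inl hV, f_chain f R hrec l i w hw⟩
  · exact Or.inr ⟨l, hl, w, hw, Or.inr hnone, f_chain f R hrec l i w hw⟩
  · left
    have hcyc : anc R (l - l') w = some w := by
      have : anc R (l' + (l - l')) i = (anc R l' i).bind (anc R (l - l')) :=
        anc_add R (l - l') l' i
      rw [Nat.add_sub_cancel' (le_of_lt hl'), hw, hw'] at this
      simpa using this.symm
    have hfw : f w = ⊤ := by
      apply cycle_top f (l - l') (by omega)
      exact f_chain f R hrec (l - l') w w hcyc
    refine ⟨⟨l', l, hl', hl, by rw [hw']; rfl, by rw [hw', hw]⟩, ?_⟩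
    rw [f_chain f R hrec l' i w hw', hfw]
    simp
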